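/- Let m ≥ 1 and define θ(α,i) as follows: θ(α,i) = wt_{i,2m}(α) + i/2 for i even, θ(α,i) = wt_{i,2m}(α) + (i-1)/2 + α(2m) for i odd. Fix 1 ≤ i ≤ 2m-1 and α ∈ 𝔽₂^{2m}, and let β = α ⊕ e_i ⊕ e_{2m} ⊕ e. Then θ(α,i) + θ(β,i) ≡ 1 (mod 2) if i is even, and θ(α,i) + θ(β,i) ≡ 0 (mod 2) if i is odd. -/

import Mathlib

open Finset

/-- The `l`-th coordinate (1-based, `1 ≤ l ≤ 2m`) of a vector in 𝔽₂^{2m}; `0` out of range. -/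
def coordZ (m : ℕ) (α : Fin (2*m) → ZMod 2) (l : ℕ) : ZMod 2 :=
  if h : 1 ≤ l ∧ l ≤ 2*m then α ⟨l-1, by omega⟩ else 0

/-- Partial weight `wt_{s,t}(α) = Σ_{l=s}^{t} α(l)` as a natural number. -/
def wtI (m s t : ℕ) (α : Fin (2*m) → ZMod 2) : ℕ :=
  ∑ l ∈ Finset.Icc s t, (coordZ m α l).val

/-- The `i`-th standard basis vector (1-based index `i`). -/
def eV (m i : ℕ) : Fin (2*m) → ZMod 2 :=
  fun l => if l.val + 1 = i then 1 else 0

/-- The all-ones vector. -/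
def allOne (m : ℕ) : Fin (2*m) → ZMod 2 := fun _ => 1

/-- Hamming weight. -/
def hw (m : ℕ) (α : Fin (2*m) → ZMod 2) : ℕ :=
  (Finset.univ.filter (fun l => α l ≠ 0)).card

/-- The sign function θ(α, i). -/
def theta (m : ℕ) (α : Fin (2*m) → ZMod 2) (i : ℕ) : ℕ :=
  if i % 2 = 0 then wtI m i (2*m) α + i/2
  else wtI m i (2*m) α + (i-1)/2 + (coordZ m α (2*m)).val

/-!
Modulo 2, `θ(α ⊕ γ, i) ≡ θ(α, i) + wt_{i,2m}(γ)` whenever `γ(2m) = 0`: the weight is additive mod 2,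
while the offsets `i/2`, `(i-1)/2` and the coordinate `α(2m)` do not change. For
`γ = e_i ⊕ e_{2m} ⊕ e` we have `γ(2m) = 0` and `wt_{i,2m}(γ) = 1 + 1 + (2m - i + 1) ≡ i + 1`,
so `θ(α, i) + θ(β, i) ≡ i + 1 (mod 2)`.
-/

section Weights

variable {m : ℕ}

theorem coordZ_add (α γ : Fin (2*m) → ZMod 2) (l : ℕ) :
    coordZ m (α + γ) l = coordZ m α l + coordZ m γ l := by
  unfold coordZ
  split_ifs <;> simp

theorem coordZ_eV {i l : ℕ} (hl : 1 ≤ l ∧ l ≤ 2*m) :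
    coordZ m (eV m i) l = if l = i then 1 else 0 := by
  simp only [coordZ, dif_pos hl, eV, Nat.sub_add_cancel hl.1]

theorem coordZ_allOne {l : ℕ} (hl : 1 ≤ l ∧ l ≤ 2*m) : coordZ m (allOne m) l = 1 := by
  simp only [coordZ, dif_pos hl, allOne]

theorem cast_wtI (s t : ℕ) (α : Fin (2*m) → ZMod 2) :
    (wtI m s t α : ZMod 2) = ∑ l ∈ Icc s t, coordZ m α l := by
  simp only [wtI, Nat.cast_sum, ZMod.natCast_val, ZMod.cast_id', id]

theorem cast_wtI_add (s t : ℕ) (α γ : Fin (2*m) → ZMod 2) :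
    (wtI m s t (α + γ) : ZMod 2) = wtI m s t α + wtI m s t γ := by
  simp only [cast_wtI, coordZ_add, sum_add_distrib]

variable {s t : ℕ}

theorem wtI_eV (hs : 1 ≤ s) (ht : t ≤ 2*m) {i : ℕ} (hi : i ∈ Icc s t) :
    wtI m s t (eV m i) = 1 := by
  have hrange : ∀ l ∈ Icc s t, (coordZ m (eV m i) l).val = if l = i then 1 else 0 := by
    intro l hl
    rw [mem_Icc] at hl
    rw [coordZ_eV (by omega)]
    split_ifs <;> rfl
  rw [wtI, sum_congr rfl hrange, sum_ite_eq', if_pos hi]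

theorem wtI_allOne (hs : 1 ≤ s) (ht : t ≤ 2*m) : wtI m s t (allOne m) = t + 1 - s := by
  have hrange : ∀ l ∈ Icc s t, (coordZ m (allOne m) l).val = 1 := by
    intro l hl
    rw [mem_Icc] at hl
    rw [coordZ_allOne (by omega)]
    rfl
  rw [wtI, sum_congr rfl hrange, sum_const, Nat.card_Icc, smul_eq_mul, mul_one]

end Weights

theorem cast_theta_add {m : ℕ} (α γ : Fin (2*m) → ZMod 2) (i : ℕ) (hγ : coordZ m γ (2*m) = 0) :
    (theta m (α + γ) i : ZMod 2) = theta m α i + wtI m i (2*m) γ := by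
  unfold theta
  split_ifs
  · push_cast [cast_wtI_add]
    ring
  · push_cast [cast_wtI_add, coordZ_add, hγ, add_zero]
    ring

section Flip

variable {m i : ℕ}

theorem coordZ_flip_last (hi : i < 2*m) :
    coordZ m (eV m i + (eV m (2*m) + allOne m)) (2*m) = 0 := by
  have hl : 1 ≤ 2*m ∧ 2*m ≤ 2*m := ⟨by omega, le_rfl⟩
  rw [coordZ_add, coordZ_add, coordZ_eV hl, coordZ_eV hl, coordZ_allOne hl,
    if_neg hi.ne', if_pos rfl]
  decide

theorem cast_wtI_flip (hi1 : 1 ≤ i) (hi2 : i < 2*m) :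
    (wtI m i (2*m) (eV m i + (eV m (2*m) + allOne m)) : ZMod 2) = (i + 1 : ℕ) := by
  have hwidth : ((2*m + 1 - i : ℕ) : ZMod 2) = (i + 1 : ℕ) := by
    rw [ZMod.natCast_eq_natCast_iff']
    omega
  rw [cast_wtI_add, cast_wtI_add, wtI_eV hi1 le_rfl (mem_Icc.mpr ⟨le_rfl, hi2.le⟩),
    wtI_eV (by omega) le_rfl (mem_Icc.mpr ⟨hi2.le, le_rfl⟩), wtI_allOne hi1 le_rfl, hwidth,
    ← add_assoc, CharTwo.add_self_eq_zero, zero_add]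

end Flip

theorem theta_step_parity_general (m : ℕ)
    (α : Fin (2*m) → ZMod 2) (i : ℕ) (hi1 : 1 ≤ i) (hi2 : i ≤ 2*m - 1) :
    let β := α + eV m i + eV m (2*m) + allOne m
    (i % 2 = 0 → (theta m α i + theta m β i) % 2 = 1) ∧
    (i % 2 = 1 → (theta m α i + theta m β i) % 2 = 0) := by
  intro β
  have hi : i < 2*m := by omega
  have hβ : β = α + (eV m i + (eV m (2*m) + allOne m)) := by simp only [β, add_assoc]
  have hsum : ((theta m α i + theta m β i : ℕ) : ZMod 2) = (i + 1 : ℕ) := by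
    rw [Nat.cast_add, hβ, cast_theta_add _ _ _ (coordZ_flip_last hi), cast_wtI_flip hi1 hi,
      ← add_assoc, CharTwo.add_self_eq_zero, zero_add]
  have hmod := (ZMod.natCast_eq_natCast_iff' _ _ _).mp hsum
  omega

theorem theta_step_parity (m : ℕ) (hm : 1 ≤ m)
    (α : Fin (2*m) → ZMod 2) (i : ℕ) (hi1 : 1 ≤ i) (hi2 : i ≤ 2*m - 1) :
    let β := α + eV m i + eV m (2*m) + allOne m
    (i % 2 = 0 → (theta m α i + theta m β i) % 2 = 1) ∧
    (i % 2 = 1 → (theta m α i + theta m β i) % 2 = 0) :=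
  theta_step_parity_general m α i hi1 hi2
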